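/- Under the hypotheses of the ℝ⁵ double-rotation Taylor–Proudman theorem — λ₁, λ₂ ∈ ℝ nonzero, u : ℝ⁵ → ℝ⁵ continuously differentiable, Π : ℝ⁵ → ℝ twice continuously differentiable with 2(−λ₁ u₂, λ₁ u₁, −λ₂ u₄, λ₂ u₃, 0) = −∇Π everywhere — together with the incompressibility condition Σ_{i=1}^{5} u_{i,i} = 0, one has u_{5,5} = 0 everywhere; that is, the total incompressibility decomposes into the two planar incompressibilities u_{1,1} + u_{2,2} = 0 and u_{3,3} + u_{4,4} = 0 plus u_{5,5} = 0. -/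

import Mathlib

/-! In a rotation plane the balance makes the velocity the skew gradient of `Π / 2λ`, so the
planar divergence is a difference of mixed second partials of `Π`, which vanishes by Schwarz's
theorem. Total incompressibility then leaves only `u_{5,5} = 0`. -/

/-- The partial derivative `∂ᵢ f` of a scalar function on `ℝ^n` at `x`. -/
noncomputable def pd {n : ℕ} (i : Fin n) (f : (Fin n → ℝ) → ℝ) (x : Fin n → ℝ) : ℝ :=
  fderiv ℝ f x (Pi.single i 1)

section SecondPartials

variable {n : ℕ} {f : (Fin n → ℝ) → ℝ}

lemma differentiableAt_fderiv_of_contDiff_two (hf : ContDiff ℝ 2 f) (x : Fin n → ℝ) :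
    DifferentiableAt ℝ (fderiv ℝ f) x :=
  ((hf.fderiv_right (m := 1) (by norm_num)).differentiable one_ne_zero).differentiableAt

lemma differentiableAt_pd (hf : ContDiff ℝ 2 f) (j : Fin n) (x : Fin n → ℝ) :
    DifferentiableAt ℝ (pd j f) x :=
  (differentiableAt_fderiv_of_contDiff_two hf x).clm_apply (differentiableAt_const _)

lemma pd_pd_eq_fderiv_fderiv (hf : ContDiff ℝ 2 f) (i j : Fin n) (x : Fin n → ℝ) :
    pd i (pd j f) x = fderiv ℝ (fderiv ℝ f) x (Pi.single i 1) (Pi.single j 1) := by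
  change fderiv ℝ (fun y => fderiv ℝ f y (Pi.single j 1)) x (Pi.single i 1) = _
  rw [fderiv_clm_apply (differentiableAt_fderiv_of_contDiff_two hf x)
    (differentiableAt_const _)]
  simp

lemma pd_pd_comm (hf : ContDiff ℝ 2 f) (i j : Fin n) (x : Fin n → ℝ) :
    pd i (pd j f) x = pd j (pd i f) x := by
  rw [pd_pd_eq_fderiv_fderiv hf, pd_pd_eq_fderiv_fderiv hf]
  exact hf.contDiffAt.isSymmSndFDerivAt (by norm_num) _ _

end SecondPartials

lemma pd_const_mul {n : ℕ} {f : (Fin n → ℝ) → ℝ} {x : Fin n → ℝ}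
    (hf : DifferentiableAt ℝ f x) (c : ℝ) (i : Fin n) :
    pd i (fun y => c * f y) x = c * pd i f x := by
  simp [pd, fderiv_const_mul hf]

lemma pd_add_pd_eq_zero_of_skew_gradient {n : ℕ} {ψ a b : (Fin n → ℝ) → ℝ} {c : ℝ}
    (hψ : ContDiff ℝ 2 ψ) (hc : c ≠ 0) {i j : Fin n}
    (ha : ∀ y, c * a y = -pd j ψ y) (hb : ∀ y, c * b y = pd i ψ y) (x : Fin n → ℝ) :
    pd i a x + pd j b x = 0 := by
  have ha' : a = fun y => -c⁻¹ * pd j ψ y := by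
    funext y
    rw [neg_mul, ← mul_neg, ← ha, inv_mul_cancel_left₀ hc]
  have hb' : b = fun y => c⁻¹ * pd i ψ y := by
    funext y
    rw [← hb, inv_mul_cancel_left₀ hc]
  rw [ha', hb', pd_const_mul (differentiableAt_pd hψ j x),
    pd_const_mul (differentiableAt_pd hψ i x), pd_pd_comm hψ i j]
  ring

theorem taylor_proudman_R5_incompressible_decomposition_general
    (lam₁ lam₂ : ℝ) (h₁ : lam₁ ≠ 0) (h₂ : lam₂ ≠ 0)
    (u : (Fin 5 → ℝ) → (Fin 5 → ℝ))
    (Pr : (Fin 5 → ℝ) → ℝ) (hPr : ContDiff ℝ 2 Pr)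
    (hbal : ∀ x : Fin 5 → ℝ,
      2 * (-lam₁ * u x 1) = -(pd 0 Pr x) ∧
      2 * (lam₁ * u x 0) = -(pd 1 Pr x) ∧
      2 * (-lam₂ * u x 3) = -(pd 2 Pr x) ∧
      2 * (lam₂ * u x 2) = -(pd 3 Pr x) ∧
      (0 : ℝ) = -(pd 4 Pr x))
    (hinc : ∀ x : Fin 5 → ℝ,
      pd 0 (fun y => u y 0) x + pd 1 (fun y => u y 1) x + pd 2 (fun y => u y 2) x +
        pd 3 (fun y => u y 3) x + pd 4 (fun y => u y 4) x = 0) :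
    ∀ x : Fin 5 → ℝ,
      pd 4 (fun y => u y 4) x = 0 ∧
      pd 0 (fun y => u y 0) x + pd 1 (fun y => u y 1) x = 0 ∧
      pd 2 (fun y => u y 2) x + pd 3 (fun y => u y 3) x = 0 := by
  intro x
  have plane₁ : pd 0 (fun y => u y 0) x + pd 1 (fun y => u y 1) x = 0 :=
    pd_add_pd_eq_zero_of_skew_gradient hPr (mul_ne_zero two_ne_zero h₁)
      (fun y => by linear_combination (hbal y).2.1)
      (fun y => by linear_combination -(hbal y).1) x
  have plane₂ : pd 2 (fun y => u y 2) x + pd 3 (fun y => u y 3) x = 0 :=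
    pd_add_pd_eq_zero_of_skew_gradient hPr (mul_ne_zero two_ne_zero h₂)
      (fun y => by linear_combination (hbal y).2.2.2.1)
      (fun y => by linear_combination -(hbal y).2.2.1) x
  exact ⟨by linear_combination hinc x - plane₁ - plane₂, plane₁, plane₂⟩

/-- Under the hypotheses of the `ℝ⁵` double-rotation Taylor–Proudman
theorem together with total incompressibility, one has `u_{5,5} = 0`; that is, the total
incompressibility decomposes into the two planar incompressibilities plus `u_{5,5} = 0`
(0-indexed coordinates). -/
theorem taylor_proudman_R5_incompressible_decomposition
    (lam₁ lam₂ : ℝ) (h₁ : lam₁ ≠ 0) (h₂ : lam₂ ≠ 0)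
    (u : (Fin 5 → ℝ) → (Fin 5 → ℝ)) (hu : ContDiff ℝ 1 u)
    (Pr : (Fin 5 → ℝ) → ℝ) (hPr : ContDiff ℝ 2 Pr)
    (hbal : ∀ x : Fin 5 → ℝ,
      2 * (-lam₁ * u x 1) = -(pd 0 Pr x) ∧
      2 * (lam₁ * u x 0) = -(pd 1 Pr x) ∧
      2 * (-lam₂ * u x 3) = -(pd 2 Pr x) ∧
      2 * (lam₂ * u x 2) = -(pd 3 Pr x) ∧
      (0 : ℝ) = -(pd 4 Pr x))
    (hinc : ∀ x : Fin 5 → ℝ,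
      pd 0 (fun y => u y 0) x + pd 1 (fun y => u y 1) x + pd 2 (fun y => u y 2) x +
        pd 3 (fun y => u y 3) x + pd 4 (fun y => u y 4) x = 0) :
    ∀ x : Fin 5 → ℝ,
      pd 4 (fun y => u y 4) x = 0 ∧
      pd 0 (fun y => u y 0) x + pd 1 (fun y => u y 1) x = 0 ∧
      pd 2 (fun y => u y 2) x + pd 3 (fun y => u y 3) x = 0 :=
  taylor_proudman_R5_incompressible_decomposition_general lam₁ lam₂ h₁ h₂ u Pr hPr hbal hinc
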